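/- Let H be a bialgebra over a field k of characteristic 0, and let V be a Yetter-Drinfel'd module over H, i.e., V is a left H-module and a left H-comodule (with coaction ρ(v) = Σ v_{−1} ⊗ v₀) satisfying Σ x₁ v_{−1} ⊗ x₂·v₀ = Σ (x₁·v)_{−1} x₂ ⊗ (x₁·v)₀ for all x ∈ H, v ∈ V. Let α : V → V be a linear map that is simultaneously a morphism of H-modules and of H-comodules. Then the map B : V⊗V → V⊗V defined by B(v⊗w) = Σ v_{−1}·w ⊗ v₀ commutes with α⊗α and satisfies the Hom-Yang-Baxter equation (α⊗B)∘(B⊗α)∘(α⊗B) = (B⊗α)∘(α⊗B)∘(B⊗α). -/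

import Mathlib

/-!
Write `B (v ⊗ w) = Σ v₋₁ • w ⊗ v₀` and `Ψ (y ⊗ z) = y • α w ⊗ α z`. Since `α` commutes with the
action and the coaction it can be moved past every occurrence of `B`, and coassociativity merges
the two successive coactions on `u`. Both sides of the Hom-Yang-Baxter equation at `u ⊗ v ⊗ w`
then become `Σ Ψ (Y (u₋₁ ⊗ v)) ⊗ α u₀`, with `Y` one side of the Yetter-Drinfel'd condition on
the left and the other side on the right.
-/

open TensorProduct

section YD

variable {k H V : Type*} [Field k] [CharZero k] [Ring H] [Bialgebra k H]
  [AddCommGroup V] [Module k V] [Module H V]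
  [IsScalarTower k H V] [SMulCommClass k H V]

/-- The `H`-action on `V` as a `k`-bilinear map. -/
noncomputable def actHom (k H V : Type*) [CommRing k] [Ring H] [Bialgebra k H]
    [AddCommGroup V] [Module k V] [Module H V]
    [IsScalarTower k H V] [SMulCommClass k H V] : H →ₗ[k] V →ₗ[k] V :=
  LinearMap.mk₂ k (fun x v => x • v)
    (fun x y v => add_smul x y v)
    (fun c x v => smul_assoc c x v)
    (fun x v w => smul_add x v w)
    (fun c x v => smul_comm x c v)

/-- The `H`-action on `V` as a linear map `H ⊗ V → V`. -/
noncomputable def act2 (k H V : Type*) [CommRing k] [Ring H] [Bialgebra k H]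
    [AddCommGroup V] [Module k V] [Module H V]
    [IsScalarTower k H V] [SMulCommClass k H V] : H ⊗[k] V →ₗ[k] V :=
  TensorProduct.lift (actHom k H V)

/-- The operator `B(v ⊗ w) = Σ v₍₋₁₎ • w ⊗ v₍₀₎` associated to a coaction `ρ`. -/
noncomputable def ydB (ρ : V →ₗ[k] H ⊗[k] V) : V ⊗[k] V →ₗ[k] V ⊗[k] V :=
  TensorProduct.map (act2 k H V) LinearMap.id ∘ₗ
    (TensorProduct.assoc k H V V).symm.toLinearMap ∘ₗ
    TensorProduct.map LinearMap.id (TensorProduct.comm k V V).toLinearMap ∘ₗ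
    (TensorProduct.assoc k H V V).toLinearMap ∘ₗ
    TensorProduct.map ρ LinearMap.id

/-- The operator `α ⊗ B` on `(V ⊗ V) ⊗ V` obtained via the associator. -/
noncomputable def leftTwist {k V : Type*} [CommRing k] [AddCommGroup V] [Module k V]
    (α : V →ₗ[k] V) (B : V ⊗[k] V →ₗ[k] V ⊗[k] V) :
    (V ⊗[k] V) ⊗[k] V →ₗ[k] (V ⊗[k] V) ⊗[k] V :=
  (TensorProduct.assoc k V V V).symm.toLinearMap ∘ₗ
    TensorProduct.map α B ∘ₗ (TensorProduct.assoc k V V V).toLinearMap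

end YD

section

variable {R M N P Q S : Type*} [CommSemiring R] [AddCommMonoid M] [AddCommMonoid N]
  [AddCommMonoid P] [AddCommMonoid Q] [AddCommMonoid S]
  [Module R M] [Module R N] [Module R P] [Module R Q] [Module R S]

theorem TensorProduct.map_assoc_symm_tmul (f : M ⊗[R] N →ₗ[R] Q) (g : P →ₗ[R] S) (m : M)
    (x : N ⊗[R] P) :
    map f g ((TensorProduct.assoc R M N P).symm (m ⊗ₜ x)) = map (f ∘ₗ mk R M N m) g x := by
  induction x using TensorProduct.induction_on with
  | zero => simp
  | tmul n p => rfl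
  | add x y hx hy => simp [tmul_add, hx, hy]

end

section

variable {R M X Y : Type*} [CommRing R] [AddCommGroup M] [Module R M]
  [AddCommGroup X] [Module R X] [AddCommGroup Y] [Module R Y]

theorem leftTwist_tmul (α : M →ₗ[R] M) (B : M ⊗[R] M →ₗ[R] M ⊗[R] M) (a b c : M) :
    leftTwist α B ((a ⊗ₜ b) ⊗ₜ c) = (TensorProduct.assoc R M M M).symm (α a ⊗ₜ B (b ⊗ₜ c)) :=
  rfl

theorem leftTwist_map_tmul (α : M →ₗ[R] M) (B : M ⊗[R] M →ₗ[R] M ⊗[R] M) (f : X →ₗ[R] M)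
    (g : Y →ₗ[R] M) (t : X ⊗[R] Y) (c : M) :
    leftTwist α B (map f g t ⊗ₜ c)
      = (TensorProduct.assoc R M M M).symm (map (α ∘ₗ f) (B ∘ₗ (mk R M M).flip c ∘ₗ g) t) := by
  induction t using TensorProduct.induction_on with
  | zero => simp
  | tmul x y => rfl
  | add x y hx hy => simp [add_tmul, hx, hy]

end

section

variable {k H V : Type*} [CommRing k] [Ring H] [Bialgebra k H]
  [AddCommGroup V] [Module k V] [Module H V] [IsScalarTower k H V] [SMulCommClass k H V]

@[simp]
theorem actHom_apply (x : H) (v : V) : actHom k H V x v = x • v :=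
  rfl

@[simp]
theorem act2_tmul (x : H) (v : V) : act2 k H V (x ⊗ₜ v) = x • v :=
  rfl

/- The two sides of the Yetter-Drinfel'd condition: `x ⊗ v ↦ Σ x₁ v₋₁ ⊗ x₂ • v₀` and
`x ⊗ v ↦ Σ (x₁ • v)₋₁ x₂ ⊗ (x₁ • v)₀`. -/
noncomputable def coactSmul (ρ : V →ₗ[k] H ⊗[k] V) : H ⊗[k] V →ₗ[k] H ⊗[k] V :=
  map (LinearMap.mul' k H) (act2 k H V) ∘ₗ
    (TensorProduct.tensorTensorTensorComm k H H H V).toLinearMap ∘ₗ map Coalgebra.comul ρ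

noncomputable def smulCoact (ρ : V →ₗ[k] H ⊗[k] V) : H ⊗[k] V →ₗ[k] H ⊗[k] V :=
  map (LinearMap.mul' k H ∘ₗ (TensorProduct.comm k H H).toLinearMap) LinearMap.id ∘ₗ
    (TensorProduct.assoc k H H V).symm.toLinearMap ∘ₗ map LinearMap.id ρ ∘ₗ
    map LinearMap.id (act2 k H V) ∘ₗ (TensorProduct.assoc k H H V).toLinearMap ∘ₗ
    map (TensorProduct.comm k H H).toLinearMap LinearMap.id ∘ₗ map Coalgebra.comul LinearMap.id

theorem comp_actHom_flip {α : V →ₗ[k] V} (hα : ∀ (x : H) (v : V), α (x • v) = x • α v) (v : V) :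
    α ∘ₗ (actHom k H V).flip v = (actHom k H V).flip (α v) := by
  ext x
  simp [hα]

end

section

variable {R C M P Q S : Type*} [CommSemiring R] [AddCommMonoid C] [Module R C] [CoalgebraStruct R C]
  [AddCommMonoid M] [Module R M] [AddCommMonoid P] [Module R P] [AddCommMonoid Q] [Module R Q]
  [AddCommMonoid S] [Module R S]

theorem assoc_symm_map_comp_coaction {ρ : M →ₗ[R] C ⊗[R] M}
    (hcoassoc : map LinearMap.id ρ ∘ₗ ρ
      = (TensorProduct.assoc R C C M).toLinearMap ∘ₗ map Coalgebra.comul LinearMap.id ∘ₗ ρ)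
    (f : C →ₗ[R] P) (g : C →ₗ[R] Q) (h : M →ₗ[R] S) (u : M) :
    (TensorProduct.assoc R P Q S).symm (map f (map g h ∘ₗ ρ) (ρ u))
      = map (map f g) h (map Coalgebra.comul LinearMap.id (ρ u)) := by
  have hu : map LinearMap.id ρ (ρ u)
      = TensorProduct.assoc R C C M (map Coalgebra.comul LinearMap.id (ρ u)) :=
    LinearMap.congr_fun hcoassoc u
  rw [LinearEquiv.symm_apply_eq, ← map_map_assoc, ← hu, map_map, LinearMap.comp_id]

end

section

variable {k H V : Type*} [Field k] [Ring H] [Bialgebra k H]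
  [AddCommGroup V] [Module k V] [Module H V] [IsScalarTower k H V] [SMulCommClass k H V]
  {ρ : V →ₗ[k] H ⊗[k] V} {α : V →ₗ[k] V}

theorem ydB_tmul (a b : V) :
    ydB ρ (a ⊗ₜ b) = map ((actHom k H V).flip b) LinearMap.id (ρ a) := by
  simp only [ydB, LinearMap.comp_apply, map_tmul, LinearMap.id_apply]
  induction ρ a using TensorProduct.induction_on with
  | zero => simp
  | tmul h p => rfl
  | add x y hx hy => simp_all [add_tmul]

theorem ydB_comp_mk_flip (c : V) :
    ydB ρ ∘ₗ (mk k V V).flip c = map ((actHom k H V).flip c) LinearMap.id ∘ₗ ρ := by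
  ext a
  exact ydB_tmul a c

theorem ydB_comodHom_tmul (hαcom : ρ ∘ₗ α = map LinearMap.id α ∘ₗ ρ) (a b : V) :
    ydB ρ (α a ⊗ₜ b) = map ((actHom k H V).flip b) α (ρ a) := by
  rw [ydB_tmul, ← LinearMap.comp_apply ρ α, hαcom, LinearMap.comp_apply, map_map]
  rfl

theorem ydB_comp_mk_flip_comp_comodHom (hαcom : ρ ∘ₗ α = map LinearMap.id α ∘ₗ ρ) (c : V) :
    ydB ρ ∘ₗ (mk k V V).flip c ∘ₗ α = map ((actHom k H V).flip c) α ∘ₗ ρ := by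
  ext a
  exact ydB_comodHom_tmul hαcom a c

theorem map_comp_ydB_eq_ydB_comp_map (hαmod : ∀ (x : H) (v : V), α (x • v) = x • α v)
    (hαcom : ρ ∘ₗ α = map LinearMap.id α ∘ₗ ρ) :
    map α α ∘ₗ ydB ρ = ydB ρ ∘ₗ map α α := by
  ext a b
  simp only [AlgebraTensorModule.curry_apply, curry_apply, LinearMap.coe_restrictScalars,
    LinearMap.comp_apply, map_tmul, ydB_comodHom_tmul hαcom, ydB_tmul, map_map,
    comp_actHom_flip hαmod]
  rfl

theorem leftTwist_map_ydB_leftTwist_tmul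
    (hcoassoc : map LinearMap.id ρ ∘ₗ ρ
      = (TensorProduct.assoc k H H V).toLinearMap ∘ₗ map Coalgebra.comul LinearMap.id ∘ₗ ρ)
    (hαmod : ∀ (x : H) (v : V), α (x • v) = x • α v)
    (hαcom : ρ ∘ₗ α = map LinearMap.id α ∘ₗ ρ) (u v w : V) :
    leftTwist α (ydB ρ) (map (ydB ρ) α (leftTwist α (ydB ρ) ((u ⊗ₜ v) ⊗ₜ w)))
      = map (map ((actHom k H V).flip (α w)) α ∘ₗ coactSmul ρ) α
          (map ((mk k H V).flip v) LinearMap.id (ρ u)) := by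
  have hBα_αB : map (ydB ρ) α (leftTwist α (ydB ρ) ((u ⊗ₜ v) ⊗ₜ w))
      = map (ydB ρ ∘ₗ mk k V V (α u) ∘ₗ (actHom k H V).flip w) α (ρ v) := by
    rw [leftTwist_tmul, map_assoc_symm_tmul, ydB_tmul, map_map]
    rfl
  have hcoactSmul : map (map ((actHom k H V).flip (α w)) α ∘ₗ coactSmul ρ) α
        (map ((mk k H V).flip v) LinearMap.id (ρ u))
      = map (map ((actHom k H V).flip (α w)) α ∘ₗ map (LinearMap.mul' k H) (act2 k H V) ∘ₗ
          (TensorProduct.tensorTensorTensorComm k H H H V).toLinearMap ∘ₗ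
          (mk k (H ⊗[k] H) (H ⊗[k] V)).flip (ρ v)) α
        (map Coalgebra.comul LinearMap.id (ρ u)) := by
    rw [map_map, map_map]
    rfl
  rw [hBα_αB, hcoactSmul]
  induction ρ v using TensorProduct.induction_on with
  | zero => simp
  | tmul h p =>
    calc leftTwist α (ydB ρ) (map (ydB ρ ∘ₗ mk k V V (α u) ∘ₗ (actHom k H V).flip w) α (h ⊗ₜ p))
        = leftTwist α (ydB ρ) (map ((actHom k H V).flip (h • w)) α (ρ u) ⊗ₜ α p) := by
          simp [ydB_comodHom_tmul hαcom]
      _ = (TensorProduct.assoc k V V V).symm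
            (map (α ∘ₗ (actHom k H V).flip (h • w))
              (map ((actHom k H V).flip (α p)) α ∘ₗ ρ) (ρ u)) := by
          rw [leftTwist_map_tmul, ydB_comp_mk_flip_comp_comodHom hαcom]
      _ = map (map (α ∘ₗ (actHom k H V).flip (h • w)) ((actHom k H V).flip (α p))) α
            (map Coalgebra.comul LinearMap.id (ρ u)) :=
          assoc_symm_map_comp_coaction hcoassoc _ _ _ u
      _ = _ := by
          congr 2
          ext x y
          simp [hαmod, mul_smul]
  | add s t hs ht => simp [hs, ht, LinearMap.comp_add, map_add_left]

theorem map_ydB_leftTwist_map_ydB_tmul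
    (hcoassoc : map LinearMap.id ρ ∘ₗ ρ
      = (TensorProduct.assoc k H H V).toLinearMap ∘ₗ map Coalgebra.comul LinearMap.id ∘ₗ ρ)
    (hαcom : ρ ∘ₗ α = map LinearMap.id α ∘ₗ ρ) (u v w : V) :
    map (ydB ρ) α (leftTwist α (ydB ρ) (map (ydB ρ) α ((u ⊗ₜ v) ⊗ₜ w)))
      = map (map ((actHom k H V).flip (α w)) α ∘ₗ smulCoact ρ) α
          (map ((mk k H V).flip v) LinearMap.id (ρ u)) := by
  have hαB_Bα : leftTwist α (ydB ρ) (map (ydB ρ) α ((u ⊗ₜ v) ⊗ₜ w))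
      = map (map (α ∘ₗ (actHom k H V).flip v) ((actHom k H V).flip (α w))) LinearMap.id
          (map Coalgebra.comul LinearMap.id (ρ u)) := by
    rw [map_tmul, ydB_tmul, leftTwist_map_tmul, LinearMap.comp_id, ydB_comp_mk_flip]
    exact assoc_symm_map_comp_coaction hcoassoc _ _ _ u
  have hsmulCoact : ydB ρ ∘ₗ map (α ∘ₗ (actHom k H V).flip v) ((actHom k H V).flip (α w)) ∘ₗ
        Coalgebra.comul
      = map ((actHom k H V).flip (α w)) α ∘ₗ smulCoact ρ ∘ₗ (mk k H V).flip v := by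
    ext x
    simp only [smulCoact, LinearMap.comp_apply, LinearMap.flip_apply, mk_apply, map_tmul,
      LinearMap.id_apply]
    induction Coalgebra.comul (R := k) x using TensorProduct.induction_on with
    | zero => simp
    | tmul x₁ x₂ =>
      simp only [LinearMap.comp_apply, LinearMap.flip_apply, actHom_apply, map_tmul,
        ydB_comodHom_tmul hαcom, LinearEquiv.coe_coe, TensorProduct.comm_tmul, assoc_tmul,
        LinearMap.id_apply, act2_tmul]
      induction ρ (x₁ • v) using TensorProduct.induction_on with
      | zero => simp
      | tmul g z => simp [mul_smul]
      | add s t hs ht => simp [tmul_add, hs, ht]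
    | add s t hs ht => simp [add_tmul, hs, ht]
  rw [hαB_Bα]
  simp only [map_map, LinearMap.comp_assoc, hsmulCoact, LinearMap.comp_id]

end

section YD

variable {k H V : Type*} [Field k] [CharZero k] [Ring H] [Bialgebra k H]
  [AddCommGroup V] [Module k V] [Module H V]
  [IsScalarTower k H V] [SMulCommClass k H V]

theorem stmt13_general (ρ : V →ₗ[k] H ⊗[k] V)
    -- coassociativity of the coaction
    (hcoassoc : TensorProduct.map LinearMap.id ρ ∘ₗ ρ
      = (TensorProduct.assoc k H H V).toLinearMap ∘ₗ
          TensorProduct.map Coalgebra.comul LinearMap.id ∘ₗ ρ)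
    -- the Yetter-Drinfel'd condition:
    -- Σ x₁ v₍₋₁₎ ⊗ x₂ • v₍₀₎ = Σ (x₁•v)₍₋₁₎ x₂ ⊗ (x₁•v)₍₀₎
    (hYD : TensorProduct.map (LinearMap.mul' k H) (act2 k H V) ∘ₗ
        (TensorProduct.tensorTensorTensorComm k H H H V).toLinearMap ∘ₗ
        TensorProduct.map Coalgebra.comul ρ
      = TensorProduct.map
            ((LinearMap.mul' k H) ∘ₗ (TensorProduct.comm k H H).toLinearMap)
            LinearMap.id ∘ₗ
          (TensorProduct.assoc k H H V).symm.toLinearMap ∘ₗ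
          TensorProduct.map LinearMap.id ρ ∘ₗ
          TensorProduct.map LinearMap.id (act2 k H V) ∘ₗ
          (TensorProduct.assoc k H H V).toLinearMap ∘ₗ
          TensorProduct.map (TensorProduct.comm k H H).toLinearMap LinearMap.id ∘ₗ
          TensorProduct.map Coalgebra.comul LinearMap.id)
    (α : V →ₗ[k] V)
    (hαmod : ∀ (x : H) (v : V), α (x • v) = x • α v)
    (hαcom : ρ ∘ₗ α = TensorProduct.map LinearMap.id α ∘ₗ ρ) :
    (TensorProduct.map α α ∘ₗ ydB ρ = ydB ρ ∘ₗ TensorProduct.map α α) ∧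
    (leftTwist α (ydB ρ) ∘ₗ TensorProduct.map (ydB ρ) α ∘ₗ leftTwist α (ydB ρ)
      = TensorProduct.map (ydB ρ) α ∘ₗ leftTwist α (ydB ρ) ∘ₗ
          TensorProduct.map (ydB ρ) α) := by
  have hYD' : coactSmul ρ = smulCoact ρ := hYD
  refine ⟨map_comp_ydB_eq_ydB_comp_map hαmod hαcom, TensorProduct.ext_threefold fun u v w => ?_⟩
  simp only [LinearMap.comp_apply]
  rw [leftTwist_map_ydB_leftTwist_tmul hcoassoc hαmod hαcom,
    map_ydB_leftTwist_map_ydB_tmul hcoassoc hαcom, hYD']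

theorem stmt13 (ρ : V →ₗ[k] H ⊗[k] V)
    -- coassociativity of the coaction
    (hcoassoc : TensorProduct.map LinearMap.id ρ ∘ₗ ρ
      = (TensorProduct.assoc k H H V).toLinearMap ∘ₗ
          TensorProduct.map Coalgebra.comul LinearMap.id ∘ₗ ρ)
    -- counit axiom of the coaction
    (hcounit : (TensorProduct.lid k V).toLinearMap ∘ₗ
        TensorProduct.map Coalgebra.counit LinearMap.id ∘ₗ ρ = LinearMap.id)
    -- the Yetter-Drinfel'd condition:
    -- Σ x₁ v₍₋₁₎ ⊗ x₂ • v₍₀₎ = Σ (x₁•v)₍₋₁₎ x₂ ⊗ (x₁•v)₍₀₎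
    (hYD : TensorProduct.map (LinearMap.mul' k H) (act2 k H V) ∘ₗ
        (TensorProduct.tensorTensorTensorComm k H H H V).toLinearMap ∘ₗ
        TensorProduct.map Coalgebra.comul ρ
      = TensorProduct.map
            ((LinearMap.mul' k H) ∘ₗ (TensorProduct.comm k H H).toLinearMap)
            LinearMap.id ∘ₗ
          (TensorProduct.assoc k H H V).symm.toLinearMap ∘ₗ
          TensorProduct.map LinearMap.id ρ ∘ₗ
          TensorProduct.map LinearMap.id (act2 k H V) ∘ₗ
          (TensorProduct.assoc k H H V).toLinearMap ∘ₗ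
          TensorProduct.map (TensorProduct.comm k H H).toLinearMap LinearMap.id ∘ₗ
          TensorProduct.map Coalgebra.comul LinearMap.id)
    (α : V →ₗ[k] V)
    (hαmod : ∀ (x : H) (v : V), α (x • v) = x • α v)
    (hαcom : ρ ∘ₗ α = TensorProduct.map LinearMap.id α ∘ₗ ρ) :
    (TensorProduct.map α α ∘ₗ ydB ρ = ydB ρ ∘ₗ TensorProduct.map α α) ∧
    (leftTwist α (ydB ρ) ∘ₗ TensorProduct.map (ydB ρ) α ∘ₗ leftTwist α (ydB ρ)
      = TensorProduct.map (ydB ρ) α ∘ₗ leftTwist α (ydB ρ) ∘ₗ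
          TensorProduct.map (ydB ρ) α) :=
  stmt13_general ρ hcoassoc hYD α hαmod hαcom

end YD
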